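/- Let t, ν ∈ ℝ³ be orthogonal unit vectors, A ∈ ℝ³ with A·ν = 0, and q₊, q₋ ∈ ℂ. If for every unit vector t̂ in the plane orthogonal to ν the identity −P₀(A) + (A·t̂)P₀(t̂) + Q_I = 0 holds (with Q = diag(q₊I₂,q₋I₂), Q_I = diag(q₋I₂,q₊I₂)), then A = 0 and q₊ = q₋ = 0. -/

import Mathlib

open Matrix

noncomputable def σ1 : Matrix (Fin 2) (Fin 2) ℂ := !![0, 1; 1, 0]
noncomputable def σ2 : Matrix (Fin 2) (Fin 2) ℂ := !![0, -Complex.I; Complex.I, 0]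
noncomputable def σ3 : Matrix (Fin 2) (Fin 2) ℂ := !![1, 0; 0, -1]

/-- Pauli contraction σ·a = a₁σ₁ + a₂σ₂ + a₃σ₃. -/
noncomputable def sdot (a : Fin 3 → ℂ) : Matrix (Fin 2) (Fin 2) ℂ :=
  a 0 • σ1 + a 1 • σ2 + a 2 • σ3

/-- The 4×4 Pauli Dirac symbol P₀(a) = [[0, σ·a],[σ·a, 0]]. -/
noncomputable def P0 (a : Fin 3 → ℂ) : Matrix (Fin 2 ⊕ Fin 2) (Fin 2 ⊕ Fin 2) ℂ :=
  Matrix.fromBlocks 0 (sdot a) (sdot a) 0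

/-- Bilinear dot product on ℂ³ (no conjugation). -/
noncomputable def cdot {n : ℕ} (a b : Fin n → ℂ) : ℂ := ∑ i, a i * b i

/-- Block diagonal matrix diag(qp I₂, qm I₂). -/
noncomputable def Qmat (qp qm : ℂ) : Matrix (Fin 2 ⊕ Fin 2) (Fin 2 ⊕ Fin 2) ℂ :=
  Matrix.fromBlocks (qp • 1) 0 0 (qm • 1)

/-! Comparing blocks, the identity at a single `t̂` says exactly that `q₊ = q₋ = 0` and
`σ·A = (A·t̂) σ·t̂`, i.e. `A = (A·t̂) t̂`, as the Pauli matrices are linearly independent.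
Applying this to `t` and to the unit vector `t × ν`, also orthogonal to `ν`, puts `A` on two
perpendicular lines, so `A = 0`. -/

theorem sdot_sub (a b : Fin 3 → ℂ) : sdot (a - b) = sdot a - sdot b := by
  simp only [sdot, Pi.sub_apply, sub_smul]
  abel

theorem sdot_smul (c : ℂ) (a : Fin 3 → ℂ) : sdot (c • a) = c • sdot a := by
  simp only [sdot, Pi.smul_apply, smul_eq_mul, mul_smul, smul_add]

theorem sdot_eq_zero_iff (a : Fin 3 → ℂ) : sdot a = 0 ↔ a = 0 := by
  refine ⟨fun h => ?_, fun h => by simp [h, sdot]⟩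
  have h00 : a 2 = 0 := by simpa [sdot, σ1, σ2, σ3] using congrFun (congrFun h 0) 0
  have h01 : a 0 - a 1 * Complex.I = 0 := by
    simpa [sdot, σ1, σ2, σ3, sub_eq_add_neg] using congrFun (congrFun h 0) 1
  have h10 : a 0 + a 1 * Complex.I = 0 := by
    simpa [sdot, σ1, σ2, σ3] using congrFun (congrFun h 1) 0
  have h1 : a 1 = 0 := by
    have : 2 * Complex.I * a 1 = 0 := by linear_combination h10 - h01
    simpa [Complex.I_ne_zero] using this
  ext i
  fin_cases i
  · show a 0 = 0
    linear_combination h10 - Complex.I * h1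
  · exact h1
  · exact h00

theorem neg_P0_add_smul_P0_add_Qmat (a b : Fin 3 → ℂ) (c qp qm : ℂ) :
    -P0 a + c • P0 b + Qmat qm qp
      = fromBlocks (qm • 1) (sdot (c • b - a)) (sdot (c • b - a)) (qp • 1) := by
  simp only [P0, Qmat, fromBlocks_neg, fromBlocks_smul, fromBlocks_add, sdot_sub, sdot_smul,
    neg_zero, smul_zero, add_zero, zero_add, neg_add_eq_sub]

theorem neg_P0_add_smul_P0_add_Qmat_eq_zero_iff (a b : Fin 3 → ℂ) (c qp qm : ℂ) :
    -P0 a + c • P0 b + Qmat qm qp = 0 ↔ a = c • b ∧ qm = 0 ∧ qp = 0 := by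
  rw [neg_P0_add_smul_P0_add_Qmat, ← fromBlocks_zero, fromBlocks_inj, sdot_eq_zero_iff,
    sub_eq_zero, eq_comm (a := c • b)]
  simp only [smul_eq_zero, one_ne_zero, or_false]
  tauto

theorem eq_zero_of_eq_dotProduct_smul {n : Type*} [Fintype n] {R : Type*} [CommRing R]
    {A s t : n → R} (hs : A = (A ⬝ᵥ s) • s) (ht : A = (A ⬝ᵥ t) • t) (hst : s ⬝ᵥ t = 0) :
    A = 0 := by
  have hAt : A ⬝ᵥ t = 0 := by rw [hs, smul_dotProduct, hst, smul_zero]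
  rw [ht, hAt, zero_smul]

theorem sum_sq_eq_dotProduct_self {n : Type*} [Fintype n] {R : Type*} [CommSemiring R]
    (v : n → R) : ∑ i, v i ^ 2 = v ⬝ᵥ v := by
  simp only [dotProduct, sq]

theorem boundary_determination_conclusion_general (t ν : Fin 3 → ℝ)
    (ht : ∑ i, t i ^ 2 = 1) (hν : ∑ i, ν i ^ 2 = 1) (htν : ∑ i, t i * ν i = 0)
    (A : Fin 3 → ℝ) (qp qm : ℂ)
    (h : ∀ th : Fin 3 → ℝ, (∑ i, th i ^ 2 = 1) → (∑ i, th i * ν i = 0) →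
      -P0 (fun i => (A i : ℂ)) + ((∑ i, A i * th i : ℝ) : ℂ) • P0 (fun i => (th i : ℂ))
        + Qmat qm qp = 0) :
    A = 0 ∧ qp = 0 ∧ qm = 0 := by
  have hline : ∀ th : Fin 3 → ℝ, th ⬝ᵥ th = 1 → th ⬝ᵥ ν = 0 →
      A = (A ⬝ᵥ th) • th ∧ qm = 0 ∧ qp = 0 := by
    intro th hth hthν
    rw [← sum_sq_eq_dotProduct_self] at hth
    obtain ⟨hA, hqm, hqp⟩ := (neg_P0_add_smul_P0_add_Qmat_eq_zero_iff _ _ _ _ _).1 (h th hth hthν)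
    refine ⟨funext fun i => ?_, hqm, hqp⟩
    have hAi := congrFun hA i
    simp only [Pi.smul_apply, smul_eq_mul, ← Complex.ofReal_mul, Complex.ofReal_inj] at hAi
    exact hAi
  rw [sum_sq_eq_dotProduct_self] at ht hν
  change t ⬝ᵥ ν = 0 at htν
  set s := t ⨯₃ ν
  have hs : s ⬝ᵥ s = 1 := by
    rw [cross_dot_cross, ht, hν, dotProduct_comm ν t, htν]
    ring
  obtain ⟨hAt, hqm, hqp⟩ := hline t ht htν
  obtain ⟨hAs, -, -⟩ := hline s hs ((dotProduct_comm _ _).trans (dot_cross_self t ν))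
  exact ⟨eq_zero_of_eq_dotProduct_smul hAs hAt (dotProduct_comm t s ▸ dot_self_cross t ν),
    hqp, hqm⟩

/-- If −P₀(A) + (A·t̂)P₀(t̂) + Q_I = 0 holds for every unit vector t̂ orthogonal to ν,
where A·ν = 0, then A = 0 and q₊ = q₋ = 0. -/
theorem boundary_determination_conclusion (t ν : Fin 3 → ℝ)
    (ht : ∑ i, t i ^ 2 = 1) (hν : ∑ i, ν i ^ 2 = 1) (htν : ∑ i, t i * ν i = 0)
    (A : Fin 3 → ℝ) (hAν : ∑ i, A i * ν i = 0) (qp qm : ℂ)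
    (h : ∀ th : Fin 3 → ℝ, (∑ i, th i ^ 2 = 1) → (∑ i, th i * ν i = 0) →
      -P0 (fun i => (A i : ℂ)) + ((∑ i, A i * th i : ℝ) : ℂ) • P0 (fun i => (th i : ℂ))
        + Qmat qm qp = 0) :
    A = 0 ∧ qp = 0 ∧ qm = 0 :=
  boundary_determination_conclusion_general t ν ht hν htν A qp qm h
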